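/- If a graph H on n vertices has semi-ladder index at most q, then the number of inclusion-wise maximal cliques in H is at most the number of subsets of V(H) of size at most q, and in particular at most (n+1)^q. -/

import Mathlib

open SimpleGraph Set

variable {V : Type*}

/-- The `d`-th power of a graph: distinct vertices adjacent iff joined by a walk
of length at most `d`. -/
def gpow (G : SimpleGraph V) (d : ℕ) : SimpleGraph V where
  Adj u v := u ≠ v ∧ ∃ p : G.Walk u v, p.length ≤ d
  symm := by
    constructor
    rintro u v ⟨h, p, hp⟩
    exact ⟨h.symm, p.reverse, by simpa using hp⟩
  loopless := by constructor; rintro u ⟨h, _⟩; exact h rfl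

/-- `v` is weakly `r`-reachable from `u` with respect to the ordering `σ`:
there is a path (walk) of length at most `r` from `u` to `v` all of whose
vertices are `≥_σ v`. -/
def wreach (G : SimpleGraph V) (σ : V → ℕ) (r : ℕ) (u v : V) : Prop :=
  ∃ p : G.Walk u v, p.length ≤ r ∧ ∀ x ∈ p.support, σ v ≤ σ x

/-- The weak `r`-coloring number of the ordering `σ`. -/
noncomputable def wcolOrd (G : SimpleGraph V) (σ : V → ℕ) (r : ℕ) : ℕ :=
  sSup { n | ∃ u, n = {v | wreach G σ r u v}.ncard }

/-- The weak `r`-coloring number of `G`: minimum over (injective) vertex orderings. -/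
noncomputable def wcol (G : SimpleGraph V) (r : ℕ) : ℕ :=
  sInf { c | ∃ σ : V → ℕ, Function.Injective σ ∧ wcolOrd G σ r = c }

/-- The coloring number of the ordering `σ`: max over vertices of one plus
the number of earlier neighbors. -/
noncomputable def colOrd (G : SimpleGraph V) (σ : V → ℕ) : ℕ :=
  sSup { n | ∃ u, n = 1 + {v | G.Adj u v ∧ σ v < σ u}.ncard }

/-- The coloring number of `G` (one plus degeneracy). -/
noncomputable def colNum (G : SimpleGraph V) : ℕ :=
  sInf { c | ∃ σ : V → ℕ, Function.Injective σ ∧ colOrd G σ = c }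

/-- Maximum degree. -/
noncomputable def maxDeg (G : SimpleGraph V) : ℕ :=
  sSup { n | ∃ u, n = (G.neighborSet u).ncard }

/-- Clique number. -/
noncomputable def cliqueNum' (G : SimpleGraph V) : ℕ :=
  sSup { n | ∃ s : Finset V, G.IsNClique n s }

/-- A clustering of `H`: a partition of the vertex set into cliques. -/
def IsClustering (H : SimpleGraph V) (𝒳 : Set (Set V)) : Prop :=
  Setoid.IsPartition 𝒳 ∧ ∀ A ∈ 𝒳, H.IsClique A

/-- The quotient graph `H/𝒳`: blocks are vertices, distinct blocks adjacent iff some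
pair of their elements is adjacent in `H`. -/
def quotGraph (H : SimpleGraph V) (𝒳 : Set (Set V)) : SimpleGraph 𝒳 where
  Adj A B := A ≠ B ∧ ∃ a ∈ (A : Set V), ∃ b ∈ (B : Set V), H.Adj a b
  symm := by
    constructor
    rintro A B ⟨hne, a, ha, b, hb, hab⟩
    exact ⟨hne.symm, b, hb, a, ha, hab.symm⟩
  loopless := by constructor; rintro A ⟨h, _⟩; exact h rfl

/-- `S` induces a disjoint union of complete graphs in `H`
(adjacency is transitive on `S`). -/
def IsClusterSet (H : SimpleGraph V) (S : Set V) : Prop :=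
  ∀ a ∈ S, ∀ b ∈ S, ∀ c ∈ S, H.Adj a b → H.Adj b c → a ≠ c → H.Adj a c

/-- The subchromatic number: least `c` admitting a `c`-coloring in which every color
class induces a disjoint union of complete graphs. -/
noncomputable def subchrom (H : SimpleGraph V) : ℕ :=
  sInf { c | ∃ f : V → Fin c, ∀ i, IsClusterSet H (f ⁻¹' {i}) }

/-- A semi-ladder of length `k`: `x i` non-adjacent to `y i`, while `x i` adjacent
to `y j` whenever `i < j`. -/
def IsSemiLadder (H : SimpleGraph V) {k : ℕ} (x y : Fin k → V) : Prop :=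
  (∀ i, ¬ H.Adj (x i) (y i)) ∧ ∀ i j, i < j → H.Adj (x i) (y j)

/-- The semi-ladder index of `H` is at most `q`. -/
def semiLadderIndexLE (H : SimpleGraph V) (q : ℕ) : Prop :=
  ∀ (k : ℕ) (x y : Fin k → V), IsSemiLadder H x y → k ≤ q

/-- Closed neighborhood. -/
def closedNbhd (H : SimpleGraph V) (a : V) : Set V := insert a (H.neighborSet a)

/-- Treedepth at most `k`, via a forest (ancestor) order: a strict partial order in
which ancestors of each vertex form a chain of size `< k`, and every edge joins a
comparable pair. -/
def treedepthLE (G : SimpleGraph V) (k : ℕ) : Prop :=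
  ∃ A : V → V → Prop,
    (∀ u v w, A u v → A v w → A u w) ∧ (∀ v, ¬ A v v) ∧
    (∀ a b v, A a v → A b v → a = b ∨ A a b ∨ A b a) ∧
    (∀ u v, G.Adj u v → A u v ∨ A v u) ∧
    (∀ v, {a | A a v}.ncard < k)

/-!
A maximal clique `K` is the common closed neighbourhood of its own vertices. Choose `A ⊆ K`
inclusion-minimal with the same common closed neighbourhood. Dropping any `a ∈ A` lets in a
vertex `y_a` outside `N[a]` that is adjacent to every other vertex of `A`, so an enumeration of
`A` together with the `y_a` is a semi-ladder, and `|A| ≤ q`. Since `K` is recovered from `A`,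
maximal cliques are counted by sets of at most `q` vertices, and each of those is the set of
values of some map `Fin q → Option V`.
-/

lemma exists_tuple_preimage_some_range_eq :
    ∀ {q : ℕ} {A : Set V}, A.Finite → A.ncard ≤ q →
      ∃ f : Fin q → Option V, some ⁻¹' range f = A
  | 0, A, hA, hq => ⟨Fin.elim0, by
      rw [(ncard_eq_zero hA).mp (Nat.le_zero.mp hq)]; ext; simp⟩
  | q + 1, A, hA, hq => by
    rcases A.eq_empty_or_nonempty with rfl | ⟨a, ha⟩
    · exact ⟨fun _ => none, by ext; simp⟩
    obtain ⟨f, hf⟩ := exists_tuple_preimage_some_range_eq (q := q) (hA.sdiff (t := {a}))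
      (by rw [ncard_sdiff_singleton_of_mem ha]; omega)
    refine ⟨Fin.cons (some a) f, ?_⟩
    ext v
    simp only [mem_preimage, Fin.range_cons, mem_insert_iff, Option.some.injEq]
    rw [← mem_preimage, hf]
    by_cases hva : v = a <;> simp [hva, ha]

lemma ncard_setOf_ncard_le_le_pow [Fintype V] (q : ℕ) :
    {A : Set V | A.ncard ≤ q}.ncard ≤ (Fintype.card V + 1) ^ q := by
  let values : (Fin q → Option V) → Set V := fun f => some ⁻¹' range f
  have hcover : {A : Set V | A.ncard ≤ q} ⊆ values '' univ := fun A hA => by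
    obtain ⟨f, hf⟩ := exists_tuple_preimage_some_range_eq (toFinite A) hA
    exact ⟨f, trivial, hf⟩
  calc {A : Set V | A.ncard ≤ q}.ncard
      ≤ (values '' univ).ncard := ncard_le_ncard hcover
    _ ≤ (univ : Set (Fin q → Option V)).ncard := ncard_image_le
    _ = (Fintype.card V + 1) ^ q := by simp [Nat.card_eq_fintype_card]

variable {H : SimpleGraph V}

lemma mem_closedNbhd {a y : V} : y ∈ closedNbhd H a ↔ y = a ∨ H.Adj a y := Iff.rfl

lemma biInter_closedNbhd_eq_self_of_maximal {K : Set V} (hK : H.IsClique K)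
    (hmax : ∀ K', H.IsClique K' → K ⊆ K' → K = K') :
    ⋂ a ∈ K, closedNbhd H a = K := by
  refine Subset.antisymm (fun y hy => ?_) (fun b hb => mem_iInter₂.mpr fun a ha => ?_)
  · have hins : H.IsClique (insert y K) := hK.insert fun b hb hne =>
      ((mem_closedNbhd.mp (mem_iInter₂.mp hy b hb)).resolve_left hne).symm
    exact (hmax _ hins (subset_insert y K)).symm ▸ mem_insert y K
  · by_cases hba : b = a
    · exact mem_closedNbhd.mpr (Or.inl hba)
    · exact mem_closedNbhd.mpr (Or.inr (hK ha hb (Ne.symm hba)))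

lemma ncard_le_of_forall_exists_not_adj {q : ℕ} (hq : semiLadderIndexLE H q) {A : Set V}
    (hA : ∀ a ∈ A, ∃ y, ¬ H.Adj a y ∧ ∀ b ∈ A, b ≠ a → H.Adj b y) :
    A.ncard ≤ q := by
  rcases A.finite_or_infinite with hfin | hinf
  · have : Finite A := hfin.to_subtype
    choose! y hy_not_adj hy_adj using hA
    let e := (Finite.equivFin A).symm
    let x : Fin (Nat.card A) → V := fun i => e i
    have hx_inj : Function.Injective x := Subtype.val_injective.comp e.injective
    rw [← Nat.card_coe_set_eq]
    refine hq _ x (y ∘ x) ⟨fun i => hy_not_adj _ (e i).2, fun i j hij => ?_⟩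
    exact hy_adj _ (e j).2 _ (e i).2 (hx_inj.ne hij.ne)
  · simp [hinf.ncard]

lemma exists_not_adj_of_biInter_closedNbhd_diff_ne {A : Set V} (hA : H.IsClique A) {a : V}
    (ha : a ∈ A) (hne : ⋂ b ∈ A \ {a}, closedNbhd H b ≠ ⋂ b ∈ A, closedNbhd H b) :
    ∃ y, ¬ H.Adj a y ∧ ∀ b ∈ A, b ≠ a → H.Adj b y := by
  rw [← insert_sdiff_self_of_mem ha, biInter_insert, insert_sdiff_self_of_mem ha] at hne
  obtain ⟨y, hy_rest, hy_a⟩ :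
      ∃ y ∈ ⋂ b ∈ A \ {a}, closedNbhd H b, y ∉ closedNbhd H a := by
    by_contra! h
    exact hne (inter_eq_right.mpr h).symm
  rw [mem_closedNbhd, not_or] at hy_a
  refine ⟨y, hy_a.2, fun b hb hba => ?_⟩
  rcases mem_closedNbhd.mp (mem_iInter₂.mp hy_rest b ⟨hb, hba⟩) with rfl | hadj
  · exact absurd (hA ha hb (Ne.symm hba)) hy_a.2
  · exact hadj

lemma SimpleGraph.IsClique.exists_subset_ncard_le_biInter_closedNbhd_eq [Finite V] {q : ℕ}
    (hq : semiLadderIndexLE H q) {S : Set V} (hS : H.IsClique S) :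
    ∃ A ⊆ S, A.ncard ≤ q ∧ ⋂ a ∈ A, closedNbhd H a = ⋂ a ∈ S, closedNbhd H a := by
  obtain ⟨A, hAS, hA, hmin⟩ := exists_minimal_le_of_wellFoundedLT
    (fun A : Set V => ⋂ a ∈ A, closedNbhd H a = ⋂ a ∈ S, closedNbhd H a) S rfl
  refine ⟨A, hAS, ncard_le_of_forall_exists_not_adj hq fun a ha => ?_, hA⟩
  refine exists_not_adj_of_biInter_closedNbhd_diff_ne (hS.subset hAS) ha fun h => ?_
  exact (hmin (h.trans hA) sdiff_subset ha).2 rfl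

/-- If H has semi-ladder index ≤ q, the number of maximal cliques of H is at most the
number of vertex subsets of size ≤ q, in particular at most (n+1)^q. -/
theorem stmt14 [Fintype V] (H : SimpleGraph V) (q : ℕ) (hq : semiLadderIndexLE H q) :
    {K : Set V | H.IsClique K ∧ ∀ K', H.IsClique K' → K ⊆ K' → K = K'}.ncard ≤
        {A : Set V | A.ncard ≤ q}.ncard ∧
      {K : Set V | H.IsClique K ∧ ∀ K', H.IsClique K' → K ⊆ K' → K = K'}.ncard ≤
        (Fintype.card V + 1) ^ q := by
  have hcore :
      ∀ K ∈ {K : Set V | H.IsClique K ∧ ∀ K', H.IsClique K' → K ⊆ K' → K = K'},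
        ∃ A : Set V, A.ncard ≤ q ∧ ⋂ a ∈ A, closedNbhd H a = K := fun K ⟨hK, hmax⟩ => by
    obtain ⟨A, -, hAq, hA⟩ := hK.exists_subset_ncard_le_biInter_closedNbhd_eq hq
    exact ⟨A, hAq, hA.trans (biInter_closedNbhd_eq_self_of_maximal hK hmax)⟩
  choose! core hcore_card hcore_eq using hcore
  have key := ncard_le_ncard_of_injOn (t := {A : Set V | A.ncard ≤ q}) core hcore_card
    (fun K hK L hL h => by rw [← hcore_eq K hK, ← hcore_eq L hL, h]) (toFinite _)
  exact ⟨key, key.trans (ncard_setOf_ncard_le_le_pow q)⟩
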